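/- Let W ⊆ D_j, dim_K W = t ≥ 2, V ⊂ W of codimension one, A = R/Ann(W), B_V = R/Ann(V), and C the kernel of the natural surjection A → B_V. Then the reversed Hilbert function of C, given by (H(C)ˆ)_i = H(C)_{j−i}, is an O-sequence: it is the Hilbert function of some standard graded Artinian K-algebra. -/

import Mathlib

open MvPolynomial

/-- The partial derivative endomorphisms commute. -/
theorem pderiv_endo_comm {K : Type*} [CommSemiring K] {r : ℕ} (i j : Fin r)
    (p : MvPolynomial (Fin r) K) :
    pderiv i (pderiv j p) = pderiv j (pderiv i p) := by
  induction p using MvPolynomial.induction_on with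
  | C a => simp
  | add p q hp hq => simp [hp, hq]
  | mul_X p k hp =>
      have hX : ∀ a b c : Fin r,
          pderiv a (pderiv b (X c : MvPolynomial (Fin r) K)) = 0 := by
        intro a b c
        rcases eq_or_ne c b with h | h
        · subst h; rw [pderiv_X_self]; exact pderiv_one
        · rw [pderiv_X_of_ne h, map_zero]
      simp only [pderiv_mul, map_add, pderiv_mul, hp, hX]
      ring

/-- The apolarity action of `R = K[x_1,…,x_r]` on `D = K[X_1,…,X_r]` by
partial differentiation, as an algebra map to endomorphisms. -/
noncomputable def apolHom (K : Type*) [CommSemiring K] (r : ℕ) :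
    MvPolynomial (Fin r) K →ₐ[K] Module.End K (MvPolynomial (Fin r) K) :=
  letI : CommSemiring
      (Algebra.adjoin K (Set.range fun i : Fin r =>
        ((pderiv i).toLinearMap : Module.End K (MvPolynomial (Fin r) K)))) :=
    Algebra.adjoinCommSemiringOfComm K (by
      rintro a ⟨i, rfl⟩ b ⟨j, rfl⟩
      exact LinearMap.ext fun p => pderiv_endo_comm i j p)
  (Algebra.adjoin K _).val.comp
    (aeval fun i : Fin r =>
      (⟨(pderiv i).toLinearMap, Algebra.subset_adjoin (Set.mem_range_self i)⟩ :
        Algebra.adjoin K (Set.range fun i : Fin r =>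
          ((pderiv i).toLinearMap : Module.End K (MvPolynomial (Fin r) K)))))

/-- `h ∘ F`, the differentiation action. -/
noncomputable def apol {K : Type*} [CommSemiring K] {r : ℕ}
    (h F : MvPolynomial (Fin r) K) : MvPolynomial (Fin r) K :=
  apolHom K r h F

/-- The annihilator ideal of a form `F`. -/
noncomputable def annIdeal {K : Type*} [CommSemiring K] {r : ℕ}
    (F : MvPolynomial (Fin r) K) : Ideal (MvPolynomial (Fin r) K) where
  carrier := {h | apol h F = 0}
  add_mem' := by
    intro a b ha hb
    simp only [Set.mem_setOf_eq, apol, map_add, LinearMap.add_apply] at *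
    rw [ha, hb, add_zero]
  zero_mem' := by simp [apol]
  smul_mem' := by
    intro c x hx
    simp only [Set.mem_setOf_eq, apol, smul_eq_mul, map_mul, Module.End.mul_apply] at *
    rw [hx, map_zero]

/-- The annihilator ideal of a set of forms. -/
noncomputable def annSet {K : Type*} [CommSemiring K] {r : ℕ}
    (W : Set (MvPolynomial (Fin r) K)) : Ideal (MvPolynomial (Fin r) K) where
  carrier := {h | ∀ F ∈ W, apol h F = 0}
  add_mem' := by
    intro a b ha hb F hF
    have h1 := ha F hF
    have h2 := hb F hF
    simp only [apol] at h1 h2 ⊢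
    rw [map_add, LinearMap.add_apply, h1, h2, add_zero]
  zero_mem' := by intro F hF; simp [apol]
  smul_mem' := by
    intro c x hx F hF
    have h1 := hx F hF
    simp only [apol] at h1 ⊢
    rw [smul_eq_mul, map_mul, Module.End.mul_apply, h1, map_zero]

/-- `h ↦ h ∘ F` as a `K`-linear map. -/
noncomputable def apolMap {K : Type*} [CommSemiring K] {r : ℕ}
    (F : MvPolynomial (Fin r) K) :
    MvPolynomial (Fin r) K →ₗ[K] MvPolynomial (Fin r) K where
  toFun h := apol h F
  map_add' a b := by simp [apol, map_add]
  map_smul' c a := by simp [apol, map_smul]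

/-- `R_u ∘ F`, the space of `u`-th order partial derivatives of `F`. -/
noncomputable def derivSpace {K : Type*} [CommSemiring K] {r : ℕ}
    (F : MvPolynomial (Fin r) K) (u : ℕ) :
    Submodule K (MvPolynomial (Fin r) K) :=
  Submodule.map (apolMap F) (homogeneousSubmodule (Fin r) K u)

/-- The degree-`i` part of an ideal `I`, as a subspace of `R_i`. -/
noncomputable def idealPiece {K : Type*} [CommSemiring K] {r : ℕ}
    (I : Ideal (MvPolynomial (Fin r) K)) (i : ℕ) :
    Submodule K (homogeneousSubmodule (Fin r) K i) :=
  Submodule.comap (homogeneousSubmodule (Fin r) K i).subtype (I.restrictScalars K)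

/-- The Hilbert function of `R/I` in degree `i` (for a homogeneous ideal `I`):
`dim_K (R_i / I_i)`. -/
noncomputable def hilb {K : Type*} [Field K] {r : ℕ}
    (I : Ideal (MvPolynomial (Fin r) K)) (i : ℕ) : ℕ :=
  Module.finrank K ((homogeneousSubmodule (Fin r) K i) ⧸ idealPiece I i)

/-!
Write `W = V ⊕ ⟨F⟩` with `F` a form of degree `j`. The map `h ↦ h ∘ F` sends `Ann(V)_i` onto the
degree `j - i` part of the inverse system `M = Ann(V) ∘ F`, with kernel `Ann(W)_i`; hence
`H(C)_{j-i} = dim M_i`. Since `M` is graded and closed under differentiation, Macaulay duality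
(the apolarity pairing `R_u × D_u → K` is perfect in characteristic zero) gives
`H(R/Ann(M))_i = dim M_i`, and `M` vanishes above degree `j`.
-/

open Module

section Apolarity

variable {K : Type*} [CommSemiring K] {r : ℕ}

lemma apol_add_left (p q G : MvPolynomial (Fin r) K) :
    apol (p + q) G = apol p G + apol q G := by
  rw [apol, map_add]; rfl

lemma apol_smul_left (c : K) (p G : MvPolynomial (Fin r) K) :
    apol (c • p) G = c • apol p G := by
  rw [apol, map_smul]; rfl

lemma apol_sum_left {ι : Type*} (s : Finset ι) (f : ι → MvPolynomial (Fin r) K)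
    (G : MvPolynomial (Fin r) K) : apol (∑ v ∈ s, f v) G = ∑ v ∈ s, apol (f v) G := by
  rw [apol, map_sum, LinearMap.sum_apply]; rfl

lemma apol_mul (p q G : MvPolynomial (Fin r) K) : apol (p * q) G = apol p (apol q G) := by
  rw [apol, map_mul]; rfl

lemma apol_comm (p q G : MvPolynomial (Fin r) K) :
    apol p (apol q G) = apol q (apol p G) := by
  rw [← apol_mul, mul_comm, apol_mul]

lemma apol_C (c : K) (G : MvPolynomial (Fin r) K) : apol (C c) G = c • G := by
  rw [apol, ← algebraMap_eq, AlgHom.commutes]; rfl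

lemma apol_one (G : MvPolynomial (Fin r) K) : apol 1 G = G := by
  simpa using apol_C 1 G

lemma apol_X (i : Fin r) (G : MvPolynomial (Fin r) K) : apol (X i) G = pderiv i G := by
  simp only [apol, apolHom, AlgHom.coe_comp, Function.comp_apply, aeval_X]; rfl

lemma apol_zero_left (G : MvPolynomial (Fin r) K) : apol 0 G = 0 := by
  rw [apol, map_zero]; rfl

lemma apol_add_right (p G₁ G₂ : MvPolynomial (Fin r) K) :
    apol p (G₁ + G₂) = apol p G₁ + apol p G₂ := map_add (apolHom K r p) G₁ G₂

lemma apol_smul_right (c : K) (p G : MvPolynomial (Fin r) K) :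
    apol p (c • G) = c • apol p G := map_smul (apolHom K r p) c G

lemma apol_sum_right {ι : Type*} (s : Finset ι) (p : MvPolynomial (Fin r) K)
    (f : ι → MvPolynomial (Fin r) K) : apol p (∑ v ∈ s, f v) = ∑ v ∈ s, apol p (f v) :=
  map_sum (apolHom K r p) f s

lemma apol_zero_right (p : MvPolynomial (Fin r) K) : apol p 0 = 0 := map_zero (apolHom K r p)

lemma mem_annSet_iff_le_ker {P : Submodule K (MvPolynomial (Fin r) K)}
    {h : MvPolynomial (Fin r) K} :
    h ∈ annSet (P : Set (MvPolynomial (Fin r) K)) ↔ P ≤ LinearMap.ker (apolHom K r h) :=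
  Iff.rfl

lemma annSet_sup (P Q : Submodule K (MvPolynomial (Fin r) K)) :
    annSet ((P ⊔ Q : Submodule K _) : Set (MvPolynomial (Fin r) K))
      = annSet (P : Set (MvPolynomial (Fin r) K)) ⊓ annSet (Q : Set (MvPolynomial (Fin r) K)) := by
  ext h
  rw [Ideal.mem_inf, mem_annSet_iff_le_ker, mem_annSet_iff_le_ker, mem_annSet_iff_le_ker,
    sup_le_iff]

lemma annSet_span_singleton (F : MvPolynomial (Fin r) K) :
    annSet ((Submodule.span K {F} : Submodule K _) : Set (MvPolynomial (Fin r) K))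
      = annIdeal F := by
  ext h
  rw [mem_annSet_iff_le_ker, Submodule.span_singleton_le_iff_mem]
  rfl

end Apolarity

section Homogeneity

variable {K : Type*} [CommSemiring K] {r : ℕ}

lemma pderiv_eq_zero_of_isHomogeneous_zero {p : MvPolynomial (Fin r) K}
    (hp : p.IsHomogeneous 0) (i : Fin r) : pderiv i p = 0 := by
  rw [← totalDegree_zero_iff_isHomogeneous, totalDegree_eq_zero_iff_eq_C] at hp
  rw [hp, pderiv_C]

lemma isHomogeneous_apol_X_pow (i : Fin r) (e : ℕ) {d : ℕ} {G : MvPolynomial (Fin r) K}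
    (hG : G.IsHomogeneous d) : (apol (X i ^ e) G).IsHomogeneous (d - e) := by
  induction e generalizing d G with
  | zero => simpa [apol_one] using hG
  | succ e ih =>
    rw [pow_succ, apol_mul, apol_X, Nat.sub_succ', Nat.sub_right_comm]
    exact ih hG.pderiv

lemma apol_X_pow_eq_zero_of_lt (i : Fin r) {e d : ℕ} {G : MvPolynomial (Fin r) K}
    (hG : G.IsHomogeneous d) (hde : d < e) : apol (X i ^ e) G = 0 := by
  induction e generalizing d G with
  | zero => omega
  | succ e ih =>
    rw [pow_succ, apol_mul, apol_X]
    rcases d with _ | d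
    · rw [pderiv_eq_zero_of_isHomogeneous_zero hG, apol_zero_right]
    · exact ih hG.pderiv (by omega)

lemma isHomogeneous_apol_monomial (a : Fin r →₀ ℕ) (c : K) {d : ℕ} {G : MvPolynomial (Fin r) K}
    (hG : G.IsHomogeneous d) : (apol (monomial a c) G).IsHomogeneous (d - a.degree) := by
  induction a using Finsupp.induction generalizing d G with
  | zero => simpa [apol_C] using (homogeneousSubmodule (Fin r) K d).smul_mem c hG
  | single_add i b f _ _ ih =>
    rw [monomial_single_add, apol_mul, map_add, Finsupp.degree_single, add_comm b,
      ← Nat.sub_sub]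
    exact isHomogeneous_apol_X_pow i b (ih hG)

lemma apol_monomial_eq_zero_of_lt (a : Fin r →₀ ℕ) (c : K) {d : ℕ} {G : MvPolynomial (Fin r) K}
    (hG : G.IsHomogeneous d) (hd : d < a.degree) : apol (monomial a c) G = 0 := by
  induction a using Finsupp.induction generalizing d G with
  | zero => simp at hd
  | single_add i b f _ _ ih =>
    rw [map_add, Finsupp.degree_single] at hd
    rw [monomial_single_add, apol_mul]
    rcases lt_or_ge d f.degree with hf | hf
    · rw [ih hG hf, apol_zero_right]
    · exact apol_X_pow_eq_zero_of_lt i (isHomogeneous_apol_monomial f c hG) (by omega)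

lemma degree_eq_of_mem_support {n : ℕ} {h : MvPolynomial (Fin r) K} (hh : h.IsHomogeneous n)
    {v : Fin r →₀ ℕ} (hv : v ∈ h.support) : v.degree = n :=
  (hh.degree_eq_sum_deg_support hv).symm

lemma isHomogeneous_apol {n d : ℕ} {h G : MvPolynomial (Fin r) K} (hh : h.IsHomogeneous n)
    (hG : G.IsHomogeneous d) : (apol h G).IsHomogeneous (d - n) := by
  rw [h.as_sum, apol_sum_left]
  refine IsHomogeneous.sum _ _ _ fun v hv => ?_
  rw [← degree_eq_of_mem_support hh hv]
  exact isHomogeneous_apol_monomial v _ hG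

lemma apol_eq_zero_of_lt {n d : ℕ} {h G : MvPolynomial (Fin r) K} (hh : h.IsHomogeneous n)
    (hG : G.IsHomogeneous d) (hd : d < n) : apol h G = 0 := by
  rw [h.as_sum, apol_sum_left]
  refine Finset.sum_eq_zero fun v hv => apol_monomial_eq_zero_of_lt v _ hG ?_
  rwa [degree_eq_of_mem_support hh hv]

lemma homogeneousComponent_apol_homogeneousComponent {j : ℕ} {F : MvPolynomial (Fin r) K}
    (hF : F.IsHomogeneous j) (k : MvPolynomial (Fin r) K) (n v : ℕ) :
    homogeneousComponent v (apol (homogeneousComponent n k) F)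
      = if n + v = j then apol (homogeneousComponent n k) F else 0 := by
  rcases le_or_gt n j with hn | hn
  · rw [homogeneousComponent_of_mem
      (isHomogeneous_apol (homogeneousComponent_isHomogeneous n k) hF)]
    exact if_congr (by omega) rfl rfl
  · rw [apol_eq_zero_of_lt (homogeneousComponent_isHomogeneous n k) hF hn, map_zero, ite_self]

lemma homogeneousComponent_apol {j v : ℕ} {F : MvPolynomial (Fin r) K}
    (hF : F.IsHomogeneous j) (hv : v ≤ j) (k : MvPolynomial (Fin r) K) :
    homogeneousComponent v (apol k F) = apol (homogeneousComponent (j - v) k) F := by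
  have hcond : ∀ n, n + v = j ↔ n = j - v := fun n => by omega
  conv_lhs => rw [← sum_homogeneousComponent k, apol_sum_left, map_sum]
  simp_rw [homogeneousComponent_apol_homogeneousComponent hF, hcond, Finset.sum_ite_eq']
  split_ifs with hmem
  · rfl
  · rw [homogeneousComponent_eq_zero _ k (by simp at hmem; omega), apol_zero_left]

lemma homogeneousComponent_apol_of_lt {j v : ℕ} {F : MvPolynomial (Fin r) K}
    (hF : F.IsHomogeneous j) (hv : j < v) (k : MvPolynomial (Fin r) K) :
    homogeneousComponent v (apol k F) = 0 := by
  rw [← sum_homogeneousComponent k, apol_sum_left, map_sum]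
  refine Finset.sum_eq_zero fun n _ => ?_
  rw [homogeneousComponent_apol_homogeneousComponent hF, if_neg (by omega)]

lemma apol_homogeneousComponent_eq_zero {d : ℕ} {h G : MvPolynomial (Fin r) K}
    (hG : G.IsHomogeneous d) (h0 : apol h G = 0) (n : ℕ) :
    apol (homogeneousComponent n h) G = 0 := by
  rcases le_or_gt n d with hn | hn
  · rw [← Nat.sub_sub_self hn, ← homogeneousComponent_apol hG (Nat.sub_le d n), h0, map_zero]
  · exact apol_eq_zero_of_lt (homogeneousComponent_isHomogeneous n h) hG hn

end Homogeneity

section Graded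

variable {K : Type*} [CommSemiring K] {r : ℕ}

def IsGradedSubmodule {σ : Type*} (M : Submodule K (MvPolynomial σ K)) : Prop :=
  ∀ p ∈ M, ∀ n, homogeneousComponent n p ∈ M

def IsInverseSystem (M : Submodule K (MvPolynomial (Fin r) K)) : Prop :=
  ∀ G ∈ M, ∀ g, apol g G ∈ M

lemma isGradedSubmodule_of_forall_isHomogeneous {σ : Type*} {M : Submodule K (MvPolynomial σ K)}
    {j : ℕ} (hM : ∀ G ∈ M, G.IsHomogeneous j) : IsGradedSubmodule M := by
  intro G hG n
  rw [homogeneousComponent_of_mem (hM G hG)]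
  split_ifs
  · exact hG
  · exact M.zero_mem

lemma mem_annSet_of_forall_isHomogeneous {M : Submodule K (MvPolynomial (Fin r) K)}
    (hM : IsGradedSubmodule M) {h : MvPolynomial (Fin r) K}
    (H : ∀ v, ∀ G ∈ M, G.IsHomogeneous v → apol h G = 0) :
    h ∈ annSet (M : Set (MvPolynomial (Fin r) K)) := by
  intro G hG
  rw [← sum_homogeneousComponent G, apol_sum_right]
  exact Finset.sum_eq_zero fun v _ => H v _ (hM G hG v) (homogeneousComponent_isHomogeneous v G)

lemma isGradedSubmodule_annSet {M : Submodule K (MvPolynomial (Fin r) K)}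
    (hM : IsGradedSubmodule M) :
    IsGradedSubmodule ((annSet (M : Set (MvPolynomial (Fin r) K))).restrictScalars K) :=
  fun _ hh n => mem_annSet_of_forall_isHomogeneous hM fun _ G hG hGv =>
    apol_homogeneousComponent_eq_zero hGv (hh G hG) n

lemma apolMap_apply (F h : MvPolynomial (Fin r) K) : apolMap F h = apol h F := rfl

noncomputable def apolImage (I : Ideal (MvPolynomial (Fin r) K)) (F : MvPolynomial (Fin r) K) :
    Submodule K (MvPolynomial (Fin r) K) :=
  (I.restrictScalars K).map (apolMap F)

lemma isInverseSystem_apolImage (I : Ideal (MvPolynomial (Fin r) K))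
    (F : MvPolynomial (Fin r) K) : IsInverseSystem (apolImage I F) := by
  rintro _ ⟨k, hk, rfl⟩ g
  exact ⟨g * k, I.mul_mem_left g hk, apol_mul g k F⟩

variable {I : Ideal (MvPolynomial (Fin r) K)} {j : ℕ} {F : MvPolynomial (Fin r) K}

lemma isGradedSubmodule_apolImage (hI : IsGradedSubmodule (I.restrictScalars K))
    (hF : F.IsHomogeneous j) : IsGradedSubmodule (apolImage I F) := by
  rintro _ ⟨k, hk, rfl⟩ v
  rw [apolMap_apply]
  rcases le_or_gt v j with hv | hv
  · exact ⟨_, hI k hk (j - v), (homogeneousComponent_apol hF hv k).symm⟩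
  · rw [homogeneousComponent_apol_of_lt hF hv k]
    exact Submodule.zero_mem _

lemma apolImage_inf_homogeneousSubmodule_of_lt (hF : F.IsHomogeneous j) {u : ℕ} (hu : j < u) :
    apolImage I F ⊓ homogeneousSubmodule (Fin r) K u = ⊥ := by
  rw [eq_bot_iff]
  rintro _ ⟨⟨k, -, rfl⟩, hk⟩
  have hk : (apol k F).IsHomogeneous u := hk
  rw [Submodule.mem_bot, apolMap_apply, ← homogeneousComponent_eq_self hk,
    homogeneousComponent_apol_of_lt hF hu]

lemma map_apolMap_inf_homogeneousSubmodule (hI : IsGradedSubmodule (I.restrictScalars K))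
    (hF : F.IsHomogeneous j) {i : ℕ} (hi : i ≤ j) :
    (I.restrictScalars K ⊓ homogeneousSubmodule (Fin r) K i).map (apolMap F)
      = apolImage I F ⊓ homogeneousSubmodule (Fin r) K (j - i) := by
  apply le_antisymm
  · rintro _ ⟨k, ⟨hk, hki⟩, rfl⟩
    have hki : k.IsHomogeneous i := hki
    have hkF : (apolMap F k).IsHomogeneous (j - i) := by
      rw [apolMap_apply]; exact isHomogeneous_apol hki hF
    exact ⟨Submodule.mem_map_of_mem hk, hkF⟩
  · rintro _ ⟨⟨k, hk, rfl⟩, hki⟩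
    refine ⟨homogeneousComponent i k, ⟨hI k hk i, homogeneousComponent_isHomogeneous i k⟩, ?_⟩
    have hki : (apol k F).IsHomogeneous (j - i) := hki
    have h := homogeneousComponent_apol hF (Nat.sub_le j i) k
    rw [Nat.sub_sub_self hi, homogeneousComponent_eq_self hki] at h
    exact h.symm

end Graded

instance finiteDimensional_homogeneousSubmodule {σ K : Type*} [Finite σ] [Field K] (n : ℕ) :
    FiniteDimensional K (homogeneousSubmodule σ K n) :=
  Module.Finite.iff_fg.2 (homogeneousSubmodule_fg σ K n)

section Duality

variable {K : Type*} [Field K] {r : ℕ}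

lemma apol_eq_zero_iff_constantCoeff {u : ℕ} {h G : MvPolynomial (Fin r) K}
    (hh : h.IsHomogeneous u) (hG : G.IsHomogeneous u) :
    apol h G = 0 ↔ constantCoeff (apol h G) = 0 := by
  have h0 := isHomogeneous_apol hh hG
  rw [Nat.sub_self, ← totalDegree_zero_iff_isHomogeneous, totalDegree_eq_zero_iff_eq_C] at h0
  rw [h0, constantCoeff_C, C_eq_zero]

variable [CharZero K]

lemma eq_zero_of_forall_apol_eq_zero {d : ℕ} {G : MvPolynomial (Fin r) K}
    (hG : G.IsHomogeneous d) (h0 : ∀ h : MvPolynomial (Fin r) K, h.IsHomogeneous d → apol h G = 0) :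
    G = 0 := by
  induction d generalizing G with
  | zero => simpa [apol_one] using h0 1 (isHomogeneous_one _ _)
  | succ d ih =>
    have hder : ∀ i, pderiv i G = 0 := fun i => ih hG.pderiv fun h hh => by
      rw [← apol_X, ← apol_mul]
      exact h0 _ (hh.mul (isHomogeneous_X K i))
    have euler := hG.sum_X_mul_pderiv
    simp only [hder, mul_zero, Finset.sum_const_zero] at euler
    exact (smul_eq_zero.1 euler.symm).resolve_left (Nat.succ_ne_zero d)

lemma mem_annSet_iff_forall_isHomogeneous {M : Submodule K (MvPolynomial (Fin r) K)}
    (hM : IsGradedSubmodule M) (hMi : IsInverseSystem M) {u : ℕ} {h : MvPolynomial (Fin r) K}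
    (hh : h.IsHomogeneous u) :
    h ∈ annSet (M : Set (MvPolynomial (Fin r) K))
      ↔ ∀ G ∈ M, G.IsHomogeneous u → apol h G = 0 := by
  refine ⟨fun hann G hG _ => hann G hG, fun H => mem_annSet_of_forall_isHomogeneous hM ?_⟩
  intro v G hG hGv
  rcases lt_trichotomy v u with hvu | rfl | hvu
  · exact apol_eq_zero_of_lt hh hGv hvu
  · exact H G hG hGv
  · -- `h ∘ G` has degree `v - u`, and every form `g` of that degree kills it,
    -- because `g ∘ G ∈ M` has degree `u`.
    refine eq_zero_of_forall_apol_eq_zero (isHomogeneous_apol hh hGv) fun g hg => ?_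
    rw [apol_comm]
    refine H _ (hMi G hG g) ?_
    simpa [Nat.sub_sub_self hvu.le] using isHomogeneous_apol hg hGv

end Duality

section Pairing

variable {K : Type*} [Field K] {r : ℕ}

noncomputable def apolarPairing (M : Submodule K (MvPolynomial (Fin r) K)) (u : ℕ) :
    homogeneousSubmodule (Fin r) K u →ₗ[K] ↥(M ⊓ homogeneousSubmodule (Fin r) K u) →ₗ[K] K :=
  LinearMap.mk₂ K (fun h G => constantCoeff (apol h.1 G.1))
    (fun h₁ h₂ G => by simp [apol_add_left])
    (fun c h G => by simp [apol_smul_left])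
    (fun h G₁ G₂ => by simp [apol_add_right])
    (fun c h G => by simp [apol_smul_right])

lemma apolarPairing_apply (M : Submodule K (MvPolynomial (Fin r) K)) (u : ℕ)
    (h : homogeneousSubmodule (Fin r) K u) (G : ↥(M ⊓ homogeneousSubmodule (Fin r) K u)) :
    apolarPairing M u h G = constantCoeff (apol h.1 G.1) := rfl

lemma hilb_annSet [CharZero K] {M : Submodule K (MvPolynomial (Fin r) K)}
    (hM : IsGradedSubmodule M) (hMi : IsInverseSystem M) (u : ℕ) :
    hilb (annSet (M : Set (MvPolynomial (Fin r) K))) u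
      = finrank K ↥(M ⊓ homogeneousSubmodule (Fin r) K u) := by
  have hker : LinearMap.ker (apolarPairing M u) = idealPiece (annSet (M : Set _)) u := by
    ext ⟨h, hh⟩
    rw [LinearMap.mem_ker, idealPiece, Submodule.mem_comap, Submodule.subtype_apply,
      Submodule.restrictScalars_mem, mem_annSet_iff_forall_isHomogeneous hM hMi hh,
      LinearMap.ext_iff]
    simp only [Subtype.forall, Submodule.mem_inf, LinearMap.zero_apply, apolarPairing_apply,
      and_imp]
    exact forall₃_congr fun G _ hG => (apol_eq_zero_iff_constantCoeff hh hG).symm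
  have hsurj : Function.Surjective (apolarPairing M u) := by
    refine LinearMap.flip_injective_iff₁.1 (LinearMap.ker_eq_bot.1 (eq_bot_iff.2 ?_))
    rintro ⟨G, _, hG⟩ hB
    refine (Submodule.mem_bot K).2 (Subtype.ext (eq_zero_of_forall_apol_eq_zero hG fun h hh => ?_))
    exact (apol_eq_zero_iff_constantCoeff hh hG).2 (LinearMap.congr_fun hB ⟨h, hh⟩)
  rw [hilb, ← hker, ((apolarPairing M u).quotKerEquivOfSurjective hsurj).finrank_eq,
    Subspace.dual_finrank_eq]

end Pairing

lemma finrank_eq_finrank_add_finrank_map {K E E' : Type*} [DivisionRing K] [AddCommGroup E]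
    [Module K E] [AddCommGroup E'] [Module K E'] (f : E →ₗ[K] E') {A B : Submodule K E}
    [FiniteDimensional K A] (hBA : B ≤ A) (hB : ∀ x ∈ A, f x = 0 ↔ x ∈ B) :
    finrank K A = finrank K B + finrank K (A.map f) := by
  have hker : LinearMap.ker (f.domRestrict A) = B.comap A.subtype := by
    ext x
    exact hB x x.2
  rw [← LinearMap.range_domRestrict, ← (Submodule.comapSubtypeEquivOfLe hBA).finrank_eq, ← hker,
    add_comm, LinearMap.finrank_range_add_finrank_ker]

lemma exists_sup_span_singleton_eq_of_finrank_add_one {K E : Type*} [DivisionRing K]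
    [AddCommGroup E] [Module K E] {V W : Submodule K E} [FiniteDimensional K W] (hVW : V ≤ W)
    (hdim : finrank K V + 1 = finrank K W) : ∃ F ∈ W, V ⊔ Submodule.span K {F} = W := by
  obtain ⟨F, hFW, hFV⟩ := SetLike.exists_of_lt (lt_of_le_of_ne hVW (by rintro rfl; omega))
  have hle : V ⊔ Submodule.span K {F} ≤ W :=
    sup_le hVW ((Submodule.span_singleton_le_iff_mem F W).2 hFW)
  have hlt : V < V ⊔ Submodule.span K {F} :=
    lt_of_le_of_ne le_sup_left fun h => hFV (h ▸ Submodule.mem_sup_right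
      (Submodule.mem_span_singleton_self F))
  have : FiniteDimensional K ↥(V ⊔ Submodule.span K {F}) := Submodule.finiteDimensional_of_le hle
  have := Submodule.finrank_lt_finrank_of_lt hlt
  exact ⟨F, hFW, Submodule.eq_of_le_of_finrank_le hle (by omega)⟩

section Count

variable {K : Type*} [Field K] {r : ℕ}

lemma finrank_idealPiece (I : Ideal (MvPolynomial (Fin r) K)) (i : ℕ) :
    finrank K ↥(idealPiece I i)
      = finrank K ↥(I.restrictScalars K ⊓ homogeneousSubmodule (Fin r) K i) := by
  have h : idealPiece I i = Submodule.comap (homogeneousSubmodule (Fin r) K i).subtype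
      (I.restrictScalars K ⊓ homogeneousSubmodule (Fin r) K i) := by
    rw [Submodule.comap_inf, idealPiece, Submodule.comap_subtype_self, inf_top_eq]
  rw [h]
  exact (Submodule.comapSubtypeEquivOfLe inf_le_right).finrank_eq

lemma finrank_idealPiece_annSet_eq_add {V : Submodule K (MvPolynomial (Fin r) K)}
    (hV : IsGradedSubmodule V) {j : ℕ} {F : MvPolynomial (Fin r) K} (hF : F.IsHomogeneous j)
    {i : ℕ} (hi : i ≤ j) :
    finrank K ↥(idealPiece (annSet (V : Set (MvPolynomial (Fin r) K))) i)
      = finrank K ↥(idealPiece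
          (annSet ((V ⊔ Submodule.span K {F} : Submodule K _) : Set (MvPolynomial (Fin r) K))) i)
        + finrank K ↥(apolImage (annSet (V : Set (MvPolynomial (Fin r) K))) F
            ⊓ homogeneousSubmodule (Fin r) K (j - i)) := by
  rw [finrank_idealPiece, finrank_idealPiece,
    ← map_apolMap_inf_homogeneousSubmodule (isGradedSubmodule_annSet hV) hF hi,
    annSet_sup, annSet_span_singleton]
  refine finrank_eq_finrank_add_finrank_map _ (inf_le_inf_right _ fun h hh => hh.1) ?_
  rintro h ⟨hhV, hhi⟩
  exact ⟨fun hhF => ⟨⟨hhV, hhF⟩, hhi⟩, fun hh => hh.1.2⟩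

end Count

theorem reversed_kernel_hilbert_is_O_sequence_general {K : Type*} [Field K] [CharZero K]
    {r j t : ℕ}
    (W V : Submodule K (MvPolynomial (Fin r) K))
    (hWhom : ∀ F ∈ W, MvPolynomial.IsHomogeneous F j)
    (hdimW : Module.finrank K W = t) (hVW : V ≤ W)
    (hdimV : Module.finrank K V + 1 = t)
    (hC : ℕ → ℕ)
    (hCdef : ∀ i : ℕ, hC i
        = Module.finrank K ↥(idealPiece (annSet (V : Set (MvPolynomial (Fin r) K))) i)
          - Module.finrank K ↥(idealPiece (annSet (W : Set (MvPolynomial (Fin r) K))) i)) :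
    ∃ (m : ℕ) (J : Ideal (MvPolynomial (Fin m) K)),
      (∀ p ∈ J, ∀ n : ℕ, MvPolynomial.homogeneousComponent n p ∈ J) ∧
      (∀ i ≤ j, hilb J i = hC (j - i)) ∧
      (∀ i : ℕ, j < i → hilb J i = 0) := by
  have : FiniteDimensional K W := Module.finite_of_finrank_pos (by omega)
  obtain ⟨F, hFW, hW⟩ := exists_sup_span_singleton_eq_of_finrank_add_one hVW (by omega)
  have hF := hWhom F hFW
  have hV : IsGradedSubmodule V :=
    isGradedSubmodule_of_forall_isHomogeneous fun G hG => hWhom G (hVW hG)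
  have hM := isGradedSubmodule_apolImage (isGradedSubmodule_annSet hV) hF
  have hMi := isInverseSystem_apolImage (annSet (V : Set (MvPolynomial (Fin r) K))) F
  refine ⟨r, _, isGradedSubmodule_annSet hM, fun i hi => ?_, fun i hi => ?_⟩
  · rw [hilb_annSet hM hMi, hCdef, ← hW, finrank_idealPiece_annSet_eq_add hV hF (Nat.sub_le j i),
      Nat.sub_sub_self hi]
    omega
  · rw [hilb_annSet hM hMi, apolImage_inf_homogeneousSubmodule_of_lt hF hi, finrank_bot]

/-- Lemma 2.5, last part: the reversed Hilbert function of
`C = ker(A → B_V)`, `(H(C)ˆ)_i = H(C)_{j-i}`, is an O-sequence: it is the Hilbert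
function of some standard graded Artinian `K`-algebra (a quotient of a polynomial
ring by a homogeneous ideal, vanishing in degrees `> j`). -/
theorem reversed_kernel_hilbert_is_O_sequence {K : Type*} [Field K] [CharZero K]
    {r j t : ℕ} (ht : 2 ≤ t)
    (W V : Submodule K (MvPolynomial (Fin r) K))
    (hWhom : ∀ F ∈ W, MvPolynomial.IsHomogeneous F j)
    (hdimW : Module.finrank K W = t) (hVW : V ≤ W)
    (hdimV : Module.finrank K V + 1 = t)
    (hC : ℕ → ℕ)
    (hCdef : ∀ i : ℕ, hC i
        = Module.finrank K ↥(idealPiece (annSet (V : Set (MvPolynomial (Fin r) K))) i)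
          - Module.finrank K ↥(idealPiece (annSet (W : Set (MvPolynomial (Fin r) K))) i)) :
    ∃ (m : ℕ) (J : Ideal (MvPolynomial (Fin m) K)),
      (∀ p ∈ J, ∀ n : ℕ, MvPolynomial.homogeneousComponent n p ∈ J) ∧
      (∀ i ≤ j, hilb J i = hC (j - i)) ∧
      (∀ i : ℕ, j < i → hilb J i = 0) :=
  reversed_kernel_hilbert_is_O_sequence_general W V hWhom hdimW hVW hdimV hC hCdef
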